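/- arXiv:1504.08186 — 5 statements merged into one kernel-verified Lean document; each statement's English description precedes it below -/
import Mathlib

section
/- Let V = ℝⁿ with a fixed basis v₁,…,vₙ, endowed with the vector space diffeology generated by all ordinarily smooth maps together with the map pᵢ : ℝ → V, pᵢ(x) = |x|·vᵢ. If f : V → ℝ is a smooth linear map with matrix (a₁ … aₙ) relative to v₁,…,vₙ and a basis vector of ℝ, then aᵢ = 0. Consequently the diffeological dual of V has dimension at most n − 1. -/
open Set Function TensorProduct

noncomputable section

/-- Euclidean domain of dimension `n` (plots are defined on open subsets of these). -/
abbrev Eucl (n : ℕ) : Type := EuclideanSpace ℝ (Fin n)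

/-- A family of "plots" declarations on a set `X`: for each `n`, a predicate on pairs
(open subset `U` of `ℝⁿ`, map `U → X`); maps are recorded as total maps `Eucl n → X`,
only their restriction to `U` being relevant. -/
def PlotsOn (X : Type*) : Type _ :=
  ∀ ⦃n : ℕ⦄, Set (Eucl n) → ((Eucl n) → X) → Prop

/-- A map is (diffeologically) smooth iff it sends plots to plots. -/
def DSmooth {X Y : Type*} (dX : PlotsOn X) (dY : PlotsOn Y) (f : X → Y) : Prop :=
  ∀ ⦃n : ℕ⦄ (U : Set (Eucl n)) (p : Eucl n → X), dX U p → dY U (f ∘ p)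

/-- The coarse (indiscrete) diffeology: every set map on an open domain is a plot. -/
def coarsePlots (X : Type*) : PlotsOn X := fun _ U _ => IsOpen U

/-- The standard diffeology on a Euclidean (or normed) space: ordinary smooth maps. -/
def stdPlots (E : Type*) [NormedAddCommGroup E] [NormedSpace ℝ E] : PlotsOn E :=
  fun _ U p => IsOpen U ∧ ContDiffOn ℝ (⊤ : ℕ∞) p U

/-- The product diffeology. -/
def prodPlots {X Y : Type*} (dX : PlotsOn X) (dY : PlotsOn Y) : PlotsOn (X × Y) :=
  fun _ U p => dX U (fun u => (p u).1) ∧ dY U (fun u => (p u).2)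

/-- The axioms of a diffeology: plots have open domains, depend only on values on the
domain, contain constants, are closed under precomposition with ordinary smooth maps,
and satisfy the locality (sheaf) condition. -/
structure IsDiffeology {X : Type*} (d : PlotsOn X) : Prop where
  isOpen_of_plot : ∀ ⦃n⦄ ⦃U : Set (Eucl n)⦄ ⦃p⦄, d U p → IsOpen U
  plot_congr : ∀ ⦃n⦄ ⦃U : Set (Eucl n)⦄ ⦃p q : Eucl n → X⦄, EqOn p q U → d U p → d U q
  const_plot : ∀ ⦃n⦄ ⦃U : Set (Eucl n)⦄, IsOpen U → ∀ x : X, d U (fun _ => x)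
  comp_plot : ∀ ⦃n m⦄ ⦃U : Set (Eucl n)⦄ ⦃V : Set (Eucl m)⦄ ⦃p : Eucl n → X⦄
      ⦃g : Eucl m → Eucl n⦄, IsOpen V → ContDiffOn ℝ (⊤ : ℕ∞) g V → MapsTo g V U →
      d U p → d V (p ∘ g)
  locality : ∀ ⦃n⦄ ⦃U : Set (Eucl n)⦄ ⦃p⦄, IsOpen U →
      (∀ x ∈ U, ∃ V, IsOpen V ∧ x ∈ V ∧ V ⊆ U ∧ d V p) → d U p

/-- A vector space diffeology: a diffeology making addition and scalar multiplication
smooth. -/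
structure IsVectorSpaceDiffeology (V : Type*) [AddCommGroup V] [Module ℝ V]
    (d : PlotsOn V) extends IsDiffeology d : Prop where
  add_smooth : DSmooth (prodPlots d d) d (fun q => q.1 + q.2)
  smul_smooth : DSmooth (prodPlots (stdPlots ℝ) d) d (fun q => q.1 • q.2)

/-- The functional diffeology on a set `F` of functions `X → Y` (given via `ι`):
`p : U → F` is a plot iff the induced evaluation map is smooth, i.e. for every
smooth map `g` into `U` and every plot `q` of `X` on the same domain,
`v ↦ p (g v) (q v)` is a plot of `Y`. -/
def functionalPlots {F X Y : Type*} (ι : F → X → Y) (dX : PlotsOn X) (dY : PlotsOn Y) :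
    PlotsOn F :=
  fun n U p => IsOpen U ∧ ∀ ⦃m⦄ (V : Set (Eucl m)) (g : Eucl m → Eucl n) (q : Eucl m → X),
    IsOpen V → ContDiffOn ℝ (⊤ : ℕ∞) g V → MapsTo g V U → dX V q →
    dY V (fun v => ι (p (g v)) (q v))

/-- The pushforward diffeology along `f : X → Y`: the finest diffeology on `Y` making
`f` smooth; its plots locally are constant or factor through `f`. -/
def pushforwardPlots {X Y : Type*} (d : PlotsOn X) (f : X → Y) : PlotsOn Y :=
  fun _ U p => IsOpen U ∧ ∀ x ∈ U, ∃ V, IsOpen V ∧ x ∈ V ∧ V ⊆ U ∧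
    ((∃ y, EqOn p (fun _ => y) V) ∨ ∃ q, d V q ∧ EqOn p (f ∘ q) V)

/-- The tensor product diffeology: the pushforward of the product diffeology along the
universal bilinear map `V × W → V ⊗ W`. -/
def tensorPlots {V W : Type*} [AddCommGroup V] [Module ℝ V] [AddCommGroup W] [Module ℝ W]
    (dV : PlotsOn V) (dW : PlotsOn W) : PlotsOn (V ⊗[ℝ] W) :=
  pushforwardPlots (prodPlots dV dW) (fun q => q.1 ⊗ₜ[ℝ] q.2)

/-- The functional diffeology on the space of (all) linear maps `V →ₗ[ℝ] W`;
a plot of the diffeological space `L^∞(V,W)` is exactly a plot of this diffeology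
taking values in smooth linear maps. -/
def linPlots {V W : Type*} [AddCommGroup V] [Module ℝ V] [AddCommGroup W] [Module ℝ W]
    (dV : PlotsOn V) (dW : PlotsOn W) : PlotsOn (V →ₗ[ℝ] W) :=
  functionalPlots (fun f : V →ₗ[ℝ] W => ⇑f) dV dW

/-- The functional diffeology on the (ambient space of the) diffeological dual. -/
def dualPlots {V : Type*} [AddCommGroup V] [Module ℝ V] (dV : PlotsOn V) :
    PlotsOn (V →ₗ[ℝ] ℝ) :=
  linPlots dV (stdPlots ℝ)

/-- The vector space diffeology on `ℝⁿ` generated by all ordinarily smooth maps together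
with `pᵢ : ℝ → ℝⁿ`, `pᵢ(x) = |x|·vᵢ`: the intersection of all vector space diffeologies
containing these. -/
def genPlots (n : ℕ) (v : Module.Basis (Fin n) ℝ (Eucl n)) (i : Fin n) : PlotsOn (Eucl n) :=
  fun _ U p =>
    ∀ d : PlotsOn (Eucl n), IsVectorSpaceDiffeology (Eucl n) d →
      (∀ ⦃k⦄ (U' : Set (Eucl k)) (q : Eucl k → Eucl n),
          IsOpen U' → ContDiffOn ℝ (⊤ : ℕ∞) q U' → d U' q) →
      d (univ : Set (Eucl 1)) (fun x => |x 0| • v i) →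
      d U p

/-- on `V = ℝⁿ` with the vector space diffeology generated by all smooth
maps and `pᵢ(x) = |x|·vᵢ`, every smooth linear functional `f` has `aᵢ = f(vᵢ) = 0`;
consequently the diffeological dual has dimension at most `n - 1`, i.e. there is no
linearly independent family of `n` smooth linear functionals. -/
theorem stmt1 (n : ℕ) (hn : 1 ≤ n) (v : Module.Basis (Fin n) ℝ (Eucl n)) (i : Fin n) :
    (∀ f : Eucl n →ₗ[ℝ] ℝ,
        DSmooth (genPlots n v i) (stdPlots ℝ) ⇑f → f (v i) = 0) ∧
    ¬∃ b : Fin n → (Eucl n →ₗ[ℝ] ℝ), LinearIndependent ℝ b ∧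
        ∀ j, DSmooth (genPlots n v i) (stdPlots ℝ) ⇑(b j) := by
  have key : ∀ f : Eucl n →ₗ[ℝ] ℝ,
      DSmooth (genPlots n v i) (stdPlots ℝ) ⇑f → f (v i) = 0 := by
    intro f hf
    have hp : genPlots n v i (univ : Set (Eucl 1)) (fun x => |x 0| • v i) :=
      fun d _ _ hpi => hpi
    have h1 := hf univ _ hp
    obtain ⟨-, h2⟩ := h1
    -- h2 : ContDiffOn ℝ ⊤ (⇑f ∘ fun x => |x 0| • v i) univ
    by_contra hne
    -- build smooth inclusion ℝ → Eucl 1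
    have hcd : ContDiff ℝ (⊤ : ℕ∞) (fun t : ℝ => (EuclideanSpace.equiv (Fin 1) ℝ).symm (fun _ => t)) := by
      apply (EuclideanSpace.equiv (Fin 1) ℝ).symm.contDiff.comp
      exact contDiff_pi.mpr fun _ => contDiff_id
    have hdiff : DifferentiableAt ℝ (fun t : ℝ => f (|t| • v i)) 0 := by
      have := (h2.comp (hcd.contDiffOn (s := (univ : Set ℝ))) (mapsTo_univ _ _))
      have hd := (this.differentiableOn (by simp)).differentiableAt
        (x := 0) Filter.univ_mem
      exact hd
    have habs : DifferentiableAt ℝ (fun t : ℝ => |t|) 0 := by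
      have h3 : DifferentiableAt ℝ (fun t : ℝ => |t| * f (v i)) 0 := by
        convert hdiff using 2 with t
        rw [map_smul, smul_eq_mul]
      have h4 := h3.mul_const (f (v i))⁻¹
      refine h4.congr_of_eventuallyEq (Filter.Eventually.of_forall fun t => ?_)
      show |t| = |t| * f (v i) * (f (v i))⁻¹
      rw [mul_assoc, mul_inv_cancel₀ hne, mul_one]
    exact not_differentiableAt_abs_zero habs
  refine ⟨key, ?_⟩
  rintro ⟨b, hli, hsm⟩
  have hzero : ∀ j, b j (v i) = 0 := fun j => key (b j) (hsm j)
  haveI : FiniteDimensional ℝ (Eucl n) := by infer_instance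
  have hcard : Fintype.card (Fin n) = Module.finrank ℝ (Eucl n →ₗ[ℝ] ℝ) := by
    rw [Module.finrank_linearMap, Module.finrank_self, mul_one,
      finrank_euclideanSpace_fin, Fintype.card_fin]
  haveI : Nonempty (Fin n) := ⟨⟨0, hn⟩⟩
  let b' := basisOfLinearIndependentOfCardEqFinrank hli hcard
  have hrepr := b'.sum_repr (v.coord i)
  have : v.coord i (v i) = 0 := by
    rw [← hrepr]
    simp only [LinearMap.coe_sum, Finset.sum_apply, LinearMap.smul_apply]
    rw [Finset.sum_eq_zero]
    intro j _
    have : b' j = b j := congrFun (coe_basisOfLinearIndependentOfCardEqFinrank hli hcard) j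
    rw [this, hzero j, smul_zero]
  simp [Module.Basis.coord_apply] at this
end
end

section
/- Let V = ℝⁿ (n ≥ 1) with the coarse diffeology and W = ℝ with the standard diffeology. Then every bilinear map f : V × V → W that is smooth with respect to the product diffeology on V × V is identically zero, i.e., B^∞(V, W) = 0. -/
open Set Function TensorProduct

noncomputable section

/-- every bilinear map `V × V → ℝ` on coarse `V = ℝⁿ` (`n ≥ 1`) that is
smooth for the product diffeology is identically zero. -/
theorem stmt2 (n : ℕ) (hn : 1 ≤ n) (f : Eucl n →ₗ[ℝ] Eucl n →ₗ[ℝ] ℝ)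
    (hf : DSmooth (prodPlots (coarsePlots (Eucl n)) (coarsePlots (Eucl n))) (stdPlots ℝ)
      (fun q => f q.1 q.2)) :
    f = 0 := by
  ext v w
  simp only [LinearMap.zero_apply]
  set c := f v w with hc
  by_contra hcne
  have hplot : prodPlots (coarsePlots (Eucl n)) (coarsePlots (Eucl n)) (univ : Set (Eucl 1))
      (fun u => ((if u 0 = 0 then (1:ℝ) else 0) • v, w)) := ⟨isOpen_univ, isOpen_univ⟩
  obtain ⟨-, hsm⟩ := hf _ _ hplot
  rw [contDiffOn_univ] at hsm
  have hcont : Continuous fun u : Eucl 1 => if u 0 = 0 then c else 0 := by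
    have h := hsm.continuous
    have heq : ((fun q : Eucl n × Eucl n => f q.1 q.2) ∘
        fun u : Eucl 1 => ((if u 0 = 0 then (1:ℝ) else 0) • v, w))
        = fun u : Eucl 1 => if u 0 = 0 then c else 0 := by
      funext u
      by_cases hu : u 0 = 0 <;> simp [comp, hu, hc]
    rwa [heq] at h
  have htend : Filter.Tendsto
      (fun k : ℕ => ((k + 1 : ℝ)⁻¹) • EuclideanSpace.single (0 : Fin 1) (1 : ℝ))
      Filter.atTop (nhds (0 : Eucl 1)) := by
    have h1 : Filter.Tendsto (fun k : ℕ => ((k + 1 : ℝ)⁻¹)) Filter.atTop (nhds 0) :=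
      tendsto_one_div_add_atTop_nhds_zero_nat.congr (by intro k; rw [one_div])
    simpa using h1.smul_const (EuclideanSpace.single (0 : Fin 1) (1 : ℝ))
  have hcomp := (hcont.tendsto 0).comp htend
  have hval : (fun k : ℕ => if (((k + 1 : ℝ)⁻¹) •
      EuclideanSpace.single (0 : Fin 1) (1 : ℝ)) 0 = 0 then c else 0)
      = fun _ : ℕ => (0 : ℝ) := by
    funext k
    have hk : ((k + 1 : ℝ)⁻¹) ≠ 0 := by positivity
    simp [PiLp.smul_apply, EuclideanSpace.single_apply, hk]
  rw [show (fun u : Eucl 1 => if u 0 = 0 then c else 0) ∘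
      (fun k : ℕ => ((k + 1 : ℝ)⁻¹) • EuclideanSpace.single (0 : Fin 1) (1 : ℝ))
      = fun _ : ℕ => (0 : ℝ) from hval] at hcomp
  have h0 : (if (0 : Eucl 1) 0 = 0 then c else 0) = c := by simp
  rw [h0] at hcomp
  exact hcne (tendsto_nhds_unique tendsto_const_nhds hcomp).symm
end
end

section
/- Let V be a finite-dimensional diffeological vector space such that every linear map V → ℝ is smooth (i.e., L^∞(V,ℝ) = L(V,ℝ) as sets). Then V is diffeomorphic, as a diffeological vector space, to its diffeological dual V* = L^∞(V,ℝ) endowed with the functional diffeology; an explicit diffeomorphism is v ↦ Σᵢ vᵢ*(v)·vᵢ* for a basis v₁,…,vₙ of V with dual basis v₁*,…,vₙ*. -/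
open Set Function TensorProduct

noncomputable section

/-- if `V` is a finite-dimensional diffeological vector space on which every
linear functional is smooth, then `v ↦ Σᵢ vᵢ*(v)·vᵢ*` (for a basis `v₁,…,vₙ` with dual
basis `vᵢ* = b.coord i`) is a diffeomorphism of `V` onto its diffeological dual
`V* = L^∞(V,ℝ) = L(V,ℝ)` with the functional diffeology. -/
theorem stmt9 {V : Type*} [AddCommGroup V] [Module ℝ V] [FiniteDimensional ℝ V]
    (dV : PlotsOn V) (hdV : IsVectorSpaceDiffeology V dV)
    (hall : ∀ f : V →ₗ[ℝ] ℝ, DSmooth dV (stdPlots ℝ) ⇑f)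
    (n : ℕ) (b : Module.Basis (Fin n) ℝ V)
    (T : V → (V →ₗ[ℝ] ℝ)) (hT : ∀ v, T v = ∑ i, b.coord i v • b.coord i) :
    Bijective T ∧ IsLinearMap ℝ T ∧ DSmooth dV (dualPlots dV) T ∧
      ∀ S : (V →ₗ[ℝ] ℝ) → V, LeftInverse S T → RightInverse S T →
        DSmooth (dualPlots dV) dV S := by
  classical
  -- basic closure lemmas
  have hadd : ∀ {m : ℕ} (U : Set (Eucl m)) (f g : Eucl m → V),
      dV U f → dV U g → dV U (fun u => f u + g u) := by
    intro m U f g hf hg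
    exact hdV.add_smooth U (fun u => (f u, g u)) ⟨hf, hg⟩
  have hsmul : ∀ {m : ℕ} (U : Set (Eucl m)) (c : Eucl m → ℝ) (f : Eucl m → V),
      IsOpen U → ContDiffOn ℝ (⊤ : ℕ∞) c U → dV U f → dV U (fun u => c u • f u) := by
    intro m U c f hU hc hf
    exact hdV.smul_smooth U (fun u => (c u, f u)) ⟨⟨hU, hc⟩, hf⟩
  have hsum : ∀ {ι : Type} {m : ℕ} (U : Set (Eucl m)), IsOpen U →
      ∀ (s : Finset ι) (f : ι → Eucl m → V), (∀ i ∈ s, dV U (f i)) →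
      dV U (fun u => ∑ i ∈ s, f i u) := by
    intro ι m U hU s f
    induction s using Finset.induction_on with
    | empty => intro _; simpa using hdV.const_plot hU (0 : V)
    | @insert a s ha ih =>
        intro hf
        have h1 := hf a (Finset.mem_insert_self a s)
        have h2 := ih (fun i hi => hf i (Finset.mem_insert_of_mem hi))
        have h3 := hadd U _ _ h1 h2
        refine hdV.plot_congr (fun u _ => ?_) h3
        simp [Finset.sum_insert ha]
  -- apply T and compute on basis
  have hTapp : ∀ (v w : V), T v w = ∑ i, b.coord i v * b.coord i w := by
    intro v w
    rw [hT]
    simp [LinearMap.sum_apply, LinearMap.smul_apply, smul_eq_mul]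
  have hTb : ∀ (v : V) (j : Fin n), T v (b j) = b.coord j v := by
    intro v j
    rw [hTapp]
    simp [Module.Basis.coord_apply, Module.Basis.repr_self, Finsupp.single_apply]
  have hTv : ∀ f : V →ₗ[ℝ] ℝ, T (∑ i, f (b i) • b i) = f := by
    intro f
    apply b.ext
    intro j
    rw [hTb]
    simp [Module.Basis.coord_apply, map_sum, map_smul, Module.Basis.repr_self, Finsupp.single_apply,
      smul_eq_mul]
  -- linearity
  have hlin : IsLinearMap ℝ T := by
    constructor
    · intro x y
      simp only [hT]
      rw [← Finset.sum_add_distrib]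
      congr 1; funext i
      rw [map_add, add_smul]
    · intro c x
      simp only [hT]
      rw [Finset.smul_sum]
      congr 1; funext i
      rw [map_smul, smul_eq_mul, mul_smul]
  have hinj : Injective T := by
    intro x y hxy
    apply b.ext_elem
    intro j
    have := congrArg (fun f : V →ₗ[ℝ] ℝ => f (b j)) hxy
    simpa [hTb, Module.Basis.coord_apply] using this
  have hsurj : Surjective T := fun f => ⟨∑ i, f (b i) • b i, hTv f⟩
  refine ⟨⟨hinj, hsurj⟩, hlin, ?_, ?_⟩
  · -- T is smooth
    intro m U p hp
    refine ⟨hdV.isOpen_of_plot hp, ?_⟩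
    intro k W g q hW hg hgU hq
    have hpg : dV W (p ∘ g) := hdV.comp_plot hW hg hgU hp
    have h1 : ∀ i : Fin n, ContDiffOn ℝ (⊤ : ℕ∞) (fun v => b.coord i (p (g v))) W :=
      fun i => (hall (b.coord i) W _ hpg).2
    have h2 : ∀ i : Fin n, ContDiffOn ℝ (⊤ : ℕ∞) (fun v => b.coord i (q v)) W :=
      fun i => (hall (b.coord i) W _ hq).2
    refine ⟨hW, ?_⟩
    have heq : (fun v => ((T ∘ p) (g v)) (q v))
        = fun v => ∑ i, b.coord i (p (g v)) * b.coord i (q v) := by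
      funext v; exact hTapp _ _
    rw [heq]
    exact ContDiffOn.sum (fun i _ => (h1 i).mul (h2 i))
  · -- any inverse S is smooth
    intro S hL hR m U p hp
    obtain ⟨hU, hpl⟩ := hp
    have hc : ∀ i : Fin n, ContDiffOn ℝ (⊤ : ℕ∞) (fun u => p u (b i)) U := by
      intro i
      have := hpl U id (fun _ => b i) hU contDiffOn_id (mapsTo_id U)
        (hdV.const_plot hU (b i))
      exact this.2
    have hSform : ∀ f : V →ₗ[ℝ] ℝ, S f = ∑ i, f (b i) • b i := by
      intro f
      conv_lhs => rw [← hTv f]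
      exact hL _
    have heq : (S ∘ p) = fun u => ∑ i, (fun u => p u (b i) • b i) u := by
      funext u; exact hSform (p u)
    rw [heq]
    exact hsum U hU Finset.univ _ (fun i _ =>
      hsmul U (fun u => p u (b i)) (fun _ => b i) hU (hc i) (hdV.const_plot hU (b i)))
end
end

section
/- Let V, W be finite-dimensional diffeological vector spaces. The map F̂ : V ⊗ W → L(V*, W), determined by F̂(v ⊗ w)(f) = f(v)·w, takes values in L^∞(V*, W) (i.e., each F̂(t) is a smooth linear map V* → W), and F̂ : V ⊗ W → L^∞(V*, W) is smooth with respect to the tensor product diffeology on V ⊗ W and the functional diffeology on L^∞(V*, W). -/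
open Set Function TensorProduct

noncomputable section

/-- The diffeological dual of `(V, dV)`: smooth linear functionals. -/
def DualS {V : Type*} [AddCommGroup V] [Module ℝ V] (dV : PlotsOn V) : Type _ :=
  {f : V →ₗ[ℝ] ℝ // DSmooth dV (stdPlots ℝ) ⇑f}

/-- The functional diffeology on the diffeological dual. -/
def dualSPlots {V : Type*} [AddCommGroup V] [Module ℝ V] (dV : PlotsOn V) :
    PlotsOn (DualS dV) :=
  functionalPlots (fun f : DualS dV => ⇑f.1) dV (stdPlots ℝ)

/-- The canonical map `F̂ : V ⊗ W →ₗ L(V*, W)` (here with the full algebraic dual as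
source of the target maps), determined by `F̂(v ⊗ w)(f) = f(v)·w`. -/
def Fhat (V W : Type*) [AddCommGroup V] [Module ℝ V] [AddCommGroup W] [Module ℝ W] :
    V ⊗[ℝ] W →ₗ[ℝ] (Module.Dual ℝ V →ₗ[ℝ] W) :=
  (dualTensorHom ℝ (Module.Dual ℝ V) W).comp
    (TensorProduct.map (Module.Dual.eval ℝ V) LinearMap.id)

lemma Fhat_tmul {V W : Type*} [AddCommGroup V] [Module ℝ V] [AddCommGroup W] [Module ℝ W]
    (v : V) (w : W) (f : Module.Dual ℝ V) :
    Fhat V W (v ⊗ₜ[ℝ] w) f = f v • w := by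
  simp [Fhat]

lemma functionalPlots_mono {F X Y : Type*} (ι : F → X → Y) (dX : PlotsOn X) (dY : PlotsOn Y)
    {n : ℕ} {U V : Set (Eucl n)} {p : Eucl n → F} (hV : IsOpen V) (hVU : V ⊆ U)
    (h : functionalPlots ι dX dY U p) : functionalPlots ι dX dY V p :=
  ⟨hV, fun _ V₂ g q hV₂ hg hmaps hq => h.2 V₂ g q hV₂ hg (hmaps.mono_right hVU) hq⟩

lemma Fhat_dsmooth {V W : Type*} [AddCommGroup V] [Module ℝ V] [AddCommGroup W] [Module ℝ W]
    (dV : PlotsOn V) (dW : PlotsOn W)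
    (hdV : IsVectorSpaceDiffeology V dV) (hdW : IsVectorSpaceDiffeology W dW)
    (t : V ⊗[ℝ] W) :
    DSmooth (dualSPlots dV) dW (fun f : DualS dV => Fhat V W t f.1) := by
  induction t using TensorProduct.induction_on with
  | zero =>
    intro n U p hp
    exact hdW.plot_congr (fun u _ => by simp [Function.comp]) (hdW.const_plot hp.1 0)
  | tmul v w =>
    intro n U p hp
    have h1 : stdPlots ℝ U (fun u => ((p u).1 : V →ₗ[ℝ] ℝ) v) :=
      hp.2 U id (fun _ => v) hp.1 contDiffOn_id (mapsTo_id U) (hdV.const_plot hp.1 v)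
    have h2 : prodPlots (stdPlots ℝ) dW U (fun u => (((p u).1 v : ℝ), w)) :=
      ⟨h1, hdW.const_plot hp.1 w⟩
    have h3 := hdW.smul_smooth U _ h2
    exact hdW.plot_congr (fun u _ => by simp [Function.comp, Fhat_tmul]) h3
  | add x y hx hy =>
    intro n U p hp
    have h3 : prodPlots dW dW U (fun u => (Fhat V W x (p u).1, Fhat V W y (p u).1)) :=
      ⟨hx U p hp, hy U p hp⟩
    have h4 := hdW.add_smooth U _ h3
    exact hdW.plot_congr (fun u _ => by simp [Function.comp, map_add]) h4

/-- for finite-dimensional diffeological vector spaces `V`, `W`, the map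
`F̂ : V ⊗ W → L(V*, W)`, `F̂(v ⊗ w)(f) = f(v)·w`, takes values in `L^∞(V*, W)`
(each `F̂(t)` is smooth on the diffeological dual `V*`), and as a map into
`L^∞(V*, W)` with the functional diffeology it is smooth for the tensor product
diffeology on `V ⊗ W`. -/
theorem stmt16 {V W : Type*} [AddCommGroup V] [Module ℝ V] [AddCommGroup W] [Module ℝ W]
    [FiniteDimensional ℝ V] [FiniteDimensional ℝ W]
    (dV : PlotsOn V) (dW : PlotsOn W)
    (hdV : IsVectorSpaceDiffeology V dV) (hdW : IsVectorSpaceDiffeology W dW) :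
    (∀ t : V ⊗[ℝ] W,
        DSmooth (dualSPlots dV) dW (fun f : DualS dV => Fhat V W t f.1)) ∧
    DSmooth (tensorPlots dV dW)
      (functionalPlots (fun h : DualS dV → W => h) (dualSPlots dV) dW)
      (fun t (f : DualS dV) => Fhat V W t f.1) := by
  refine ⟨fun t => Fhat_dsmooth dV dW hdV hdW t, ?_⟩
  intro n U p hp
  refine ⟨hp.1, ?_⟩
  intro m V' g q hV' hg hmaps hq
  refine hdW.locality hV' (fun x hx => ?_)
  obtain ⟨Vx, hVxo, hgx, hVxU, hcase⟩ := hp.2 (g x) (hmaps hx)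
  have hV''o : IsOpen (V' ∩ g ⁻¹' Vx) :=
    hg.continuousOn.isOpen_inter_preimage hV' hVxo
  refine ⟨V' ∩ g ⁻¹' Vx, hV''o, ⟨hx, hgx⟩, inter_subset_left, ?_⟩
  rcases hcase with ⟨t, hconst⟩ | ⟨r, hr, heq⟩
  · have hq'' := functionalPlots_mono _ _ _ hV''o inter_subset_left hq
    have h1 := Fhat_dsmooth dV dW hdV hdW t _ q hq''
    refine hdW.plot_congr (fun v hv => ?_) h1
    show Fhat V W t (q v).1 = Fhat V W (p (g v)) (q v).1
    rw [hconst hv.2]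
  · have hgV'' : ContDiffOn ℝ (⊤ : ℕ∞) g (V' ∩ g ⁻¹' Vx) := hg.mono inter_subset_left
    have hmapsVx : MapsTo g (V' ∩ g ⁻¹' Vx) Vx := fun v hv => hv.2
    have ha : dV (V' ∩ g ⁻¹' Vx) (fun v => (r (g v)).1) :=
      hdV.comp_plot hV''o hgV'' hmapsVx hr.1
    have hb : dW (V' ∩ g ⁻¹' Vx) (fun v => (r (g v)).2) :=
      hdW.comp_plot hV''o hgV'' hmapsVx hr.2
    have hval : stdPlots ℝ (V' ∩ g ⁻¹' Vx) (fun v => (q v).1 ((r (g v)).1)) :=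
      hq.2 _ id (fun v => (r (g v)).1) hV''o contDiffOn_id (fun v hv => hv.1) ha
    have hsm := hdW.smul_smooth _ (fun v => (((q v).1 ((r (g v)).1) : ℝ), (r (g v)).2))
      ⟨hval, hb⟩
    refine hdW.plot_congr (fun v hv => ?_) hsm
    show (q v).1 ((r (g v)).1) • (r (g v)).2 = Fhat V W (p (g v)) (q v).1
    rw [heq hv.2]
    simp [Fhat_tmul, Function.comp]
end
end

section
/- Let V, W be diffeological vector spaces and let f ∈ V*, g ∈ W* be smooth linear functionals. Then the linear map F(f ⊗ g) : V ⊗ W → ℝ defined by F(f ⊗ g)(Σ vⱼ ⊗ wⱼ) = Σ f(vⱼ)·g(wⱼ) is smooth with respect to the tensor product diffeology on V ⊗ W and the standard diffeology on ℝ. -/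
open Set Function TensorProduct

noncomputable section

/-- for smooth linear functionals `f ∈ V*`, `g ∈ W*`, the linear map
`F(f ⊗ g) : V ⊗ W → ℝ`, `v ⊗ w ↦ f(v)·g(w)`, is smooth for the tensor product
diffeology on `V ⊗ W` and the standard diffeology on `ℝ`. -/
theorem stmt17 {V W : Type*} [AddCommGroup V] [Module ℝ V] [AddCommGroup W] [Module ℝ W]
    (dV : PlotsOn V) (dW : PlotsOn W)
    (hdV : IsVectorSpaceDiffeology V dV) (hdW : IsVectorSpaceDiffeology W dW)
    (f : V →ₗ[ℝ] ℝ) (g : W →ₗ[ℝ] ℝ)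
    (hf : DSmooth dV (stdPlots ℝ) ⇑f) (hg : DSmooth dW (stdPlots ℝ) ⇑g) :
    DSmooth (tensorPlots dV dW) (stdPlots ℝ)
      ⇑((TensorProduct.lid ℝ ℝ).toLinearMap ∘ₗ TensorProduct.map f g) := by
  intro n U p hp
  obtain ⟨hU, hloc⟩ := hp
  refine ⟨hU, contDiffOn_of_locally_contDiffOn ?_⟩
  intro x hx
  obtain ⟨Vx, hVo, hxV, hVU, hcase⟩ := hloc x hx
  refine ⟨Vx, hVo, hxV, ?_⟩
  have hsub : U ∩ Vx ⊆ Vx := inter_subset_right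
  rcases hcase with ⟨y, hy⟩ | ⟨q, ⟨hq1, hq2⟩, hq⟩
  · apply ContDiffOn.congr (contDiffOn_const (c := (TensorProduct.lid ℝ ℝ).toLinearMap
      ((TensorProduct.map f g) y)))
    intro u hu
    simp [Function.comp, hy (hsub hu)]
  · have h1 : ContDiffOn ℝ (⊤ : ℕ∞) (fun u => f ((q u).1)) Vx :=
      (hf Vx (fun u => (q u).1) hq1).2
    have h2 : ContDiffOn ℝ (⊤ : ℕ∞) (fun u => g ((q u).2)) Vx :=
      (hg Vx (fun u => (q u).2) hq2).2
    have h3 : ContDiffOn ℝ (⊤ : ℕ∞) (fun u => f ((q u).1) * g ((q u).2)) Vx := h1.mul h2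
    apply (h3.mono hsub).congr
    intro u hu
    have := hq (hsub hu)
    simp only [Function.comp_apply] at this ⊢
    rw [this]
    simp
end
end
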